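/- Let b_k denote the Bernoulli numbers (with b_1 = −1/2) and define S(t) := t + t²/2 + Σ_{n≥1} b_{2n} t^{2n+1} ∈ ℚ[[t]]. Let B(x,t) := Σ_{n≥0} B_n(x) tⁿ ∈ (ℚ[x])[[t]] be the ordinary generating function of the Bernoulli polynomials. Then the identity t·B(x,t) = S(t/(1+t−tx)) holds in (ℚ[x])[[t]], where S(t/(1+t−tx)) denotes substitution of the power series t/(1+t−tx) (which has zero constant term in t, since 1+t−tx is a unit of (ℚ[x])[[t]]) into S. -/

import Mathlib

/-!
With `r = x - 1` the substituted series is `u = t / (1 - r t)`, so the coefficient of `t^(m+1)`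
in `u^(k+1) = t^(k+1) (1 - r t)^(-(k+1))` is `choose m k * r^(m-k)`. The coefficient of `t^(k+1)`
in `S` is `bernoulli' k = B_k(1)` (the odd Bernoulli numbers past `b_1` vanish), hence the
coefficient of `t^(m+1)` in `S(u)` is `∑ k, choose m k * B_k(1) * (x - 1)^(m-k)`. By the Appell
addition formula `B_m(x + y) = ∑ k, choose m k * B_k(x) * y^(m-k)` this is `B_m(x)`.
-/

noncomputable section

/-- Substitution of a power series `u` (assumed to have zero constant term)
into a power series `p`, i.e. `p(u)`, defined coefficientwise. -/
def PowerSeries.substPS {R : Type*} [CommRing R] (u p : PowerSeries R) : PowerSeries R :=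
  PowerSeries.mk fun k =>
    ∑ n ∈ Finset.range (k + 1), PowerSeries.coeff n p * PowerSeries.coeff k (u ^ n)

/-- The power series `S(t) = t + t²/2 + Σ_{n≥1} b_{2n} t^{2n+1} ∈ ℚ[[t]]`, where `b_k`
are the Bernoulli numbers (with `b₁ = −1/2`). Note `b₀ = 1`, so the coefficient of `t` is
`bernoulli 0 = 1`, the coefficient of `t²` is `1/2`, and for odd `n = 2k+1 ≥ 3` the
coefficient is `b_{2k} = bernoulli (n-1)`. -/
def seriesS : PowerSeries ℚ :=
  PowerSeries.mk fun n =>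
    if n = 2 then 1 / 2 else if n % 2 = 1 then bernoulli (n - 1) else 0

open PowerSeries
open scoped Nat

namespace Polynomial

open Finset

theorem aeval_bernoulli_add {A : Type*} [CommRing A] [IsDomain A] [Algebra ℚ A] (x y : A)
    (n : ℕ) :
    aeval (x + y) (bernoulli n) =
      ∑ k ∈ range (n + 1), n.choose k * aeval x (bernoulli k) * y ^ (n - k) := by
  set E : A → A⟦X⟧ := fun t => mk fun n => aeval t ((1 / n ! : ℚ) • bernoulli n)
  -- `E t * (exp A - 1) = X * e^(t X)`, and `exp A - 1` cancels in the domain `A⟦X⟧`.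
  have hexp : exp A - 1 ≠ 0 := fun h => by simpa using congr(PowerSeries.coeff 1 $h)
  have hE : E (x + y) = E x * rescale y (exp A) := mul_right_cancel₀ hexp <| by
    rw [bernoulli_generating_function, mul_right_comm, bernoulli_generating_function, mul_assoc,
      exp_mul_exp_eq_exp_add]
  have hn := congr(PowerSeries.coeff n $hE)
  simp only [E, coeff_mk, PowerSeries.coeff_mul, Nat.sum_antidiagonal_eq_sum_range_succ_mk,
    coeff_rescale, coeff_exp, map_smul] at hn
  simp only [Algebra.smul_def] at hn
  have hfac : algebraMap ℚ A (n ! : ℚ) * algebraMap ℚ A (1 / n !) = 1 := by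
    rw [← map_mul, mul_one_div_cancel (by positivity), map_one]
  rw [← one_mul (aeval _ _), ← hfac, mul_assoc, hn, mul_sum]
  refine sum_congr rfl fun k hk => ?_
  rw [← map_natCast (algebraMap ℚ A), Nat.cast_choose ℚ (mem_range_succ_iff.mp hk),
    show (n ! / (k ! * (n - k)!) : ℚ) = n ! * (1 / k !) * (1 / (n - k)!) by ring, map_mul, map_mul]
  ring

theorem bernoulli_eq_sum_bernoulli'_mul_X_sub_one_pow (m : ℕ) :
    bernoulli m =
      ∑ k ∈ range (m + 1), (m.choose k : ℚ[X]) * C (bernoulli' k) * (X - 1) ^ (m - k) := by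
  have aeval_one (p : ℚ[X]) : aeval (1 : ℚ[X]) p = C (p.eval 1) := by
    simpa using aeval_algebraMap_apply_eq_algebraMap_eval (A := ℚ[X]) (1 : ℚ) p
  have h := aeval_bernoulli_add (1 : ℚ[X]) (X - 1) m
  rw [add_sub_cancel, aeval_X_left_apply] at h
  simpa only [aeval_one, bernoulli_eval_one] using h

end Polynomial

namespace PowerSeries

open Finset

variable {R : Type*} [CommRing R]

theorem invOfUnit_one_sub_C_mul_X (r : R) : invOfUnit (1 - C r * X) 1 = rescale r (mk 1) := by
  have h : rescale r (mk 1) * (1 - C r * X) = 1 := by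
    simpa [rescale_X] using congr(rescale r $(mk_one_mul_one_sub_eq_one (S := R)))
  exact (left_inv_eq_right_inv h (mul_invOfUnit _ _ (by simp))).symm

theorem coeff_rescale_mk_one_pow_succ (r : R) (k n : ℕ) :
    coeff n (rescale r (mk 1) ^ (k + 1)) = (k + n).choose k * r ^ n := by
  rw [← map_pow, mk_one_pow_eq_mk_choose_add, coeff_rescale, coeff_mk, mul_comm]

theorem coeff_zero_substPS_X_mul (v p : R⟦X⟧) : coeff 0 (substPS (X * v) p) = coeff 0 p := by
  simp [substPS]

theorem coeff_succ_substPS_X_mul (v p : R⟦X⟧) (m : ℕ) :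
    coeff (m + 1) (substPS (X * v) p) =
      ∑ k ∈ range (m + 1), coeff (k + 1) p * coeff (m - k) (v ^ (k + 1)) := by
  rw [substPS, coeff_mk, sum_range_succ']
  simp only [pow_zero, coeff_one, add_eq_zero, one_ne_zero, and_false, if_false, mul_zero,
    add_zero]
  refine sum_congr rfl fun k hk => ?_
  rw [mul_pow, coeff_X_pow_mul', if_pos (by simpa using mem_range_succ_iff.mp hk),
    Nat.add_sub_add_right]

end PowerSeries

theorem coeff_zero_seriesS : coeff 0 seriesS = 0 := by
  simp [seriesS]

theorem coeff_seriesS_succ (k : ℕ) : coeff (k + 1) seriesS = bernoulli' k := by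
  rcases k with _ | _ | k
  · simp [seriesS]
  · norm_num [seriesS]
  rw [seriesS, coeff_mk, if_neg (by omega), Nat.add_sub_cancel]
  split_ifs with hodd
  · exact bernoulli_eq_bernoulli'_of_ne_one (by omega)
  · exact (bernoulli'_eq_zero_of_odd (by grind) (by omega)).symm

open PowerSeries in
/-- In `(ℚ[x])[[t]]` one has `t·B(x,t) = S(t/(1+t−tx))`, where `B(x,t)`
is the ordinary generating function of the Bernoulli polynomials and the inverse of the
unit `1+t−tx` is computed via `invOfUnit`. -/
theorem bernoulli_ogf_eq_seriesS_subst :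
    X * (mk fun n => Polynomial.bernoulli n)
      = substPS (X * invOfUnit (1 + X - C (Polynomial.X : Polynomial ℚ) * X) 1)
          (PowerSeries.map (Polynomial.C : ℚ →+* Polynomial ℚ) seriesS) := by
  have hunit :
      (1 + X - C Polynomial.X * X : (Polynomial ℚ)⟦X⟧) = 1 - C (Polynomial.X - 1) * X := by
    rw [map_sub, map_one]
    ring
  rw [hunit, invOfUnit_one_sub_C_mul_X]
  ext (_ | m) : 1
  · rw [coeff_zero_X_mul, coeff_zero_substPS_X_mul, coeff_map, coeff_zero_seriesS, map_zero]
  · rw [coeff_succ_X_mul, coeff_mk, coeff_succ_substPS_X_mul,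
      Polynomial.bernoulli_eq_sum_bernoulli'_mul_X_sub_one_pow m]
    refine Finset.sum_congr rfl fun k hk => ?_
    rw [coeff_map, coeff_seriesS_succ, coeff_rescale_mk_one_pow_succ,
      Nat.add_sub_cancel' (Finset.mem_range_succ_iff.mp hk)]
    ring

end
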